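/- Let L be a unimodular Hermitian lattice over O_F (F an imaginary quadratic field with unit group {±1}) and ℓ ∈ L a primitive vector with ⟨ℓ,ℓ⟩ < 0 such that the reflection σ_{ℓ,-1}: v ↦ v - 2⟨v,ℓ⟩/⟨ℓ,ℓ⟩·ℓ preserves L and L/(ℓO_F ⊕ K_ℓ) ≅ O_F/2O_F. Then ⟨ℓ,ℓ⟩ = -2. -/

import Mathlib

/-!
Since `σ` fixes `⟨ℓ,ℓ⟩`, its image under `ι` is real, so `⟨ℓ,ℓ⟩` is a negative rational integer `m`
(`F` is imaginary quadratic). Unimodularity represents the functional `v ↦ 2⟨v,ℓ⟩/m` as `⟨·,u⟩`,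
and nondegeneracy then gives `2ℓ = m u`; as `ℓ` is primitive, `m ∣ 2`. If `m = -1`, every `v`
splits as `-⟨v,ℓ⟩ℓ + (v + ⟨v,ℓ⟩ℓ) ∈ ℓ𝓞_F ⊕ K_ℓ`, so `L/(ℓ𝓞_F ⊕ K_ℓ) = 0 ≠ 𝓞_F/2𝓞_F`.
Hence `m = -2`.
-/

open NumberField

/-- A Hermitian form on a module `M` over a ring `R` with respect to a ring
endomorphism `σ` of `R` (the conjugation). -/
def IsHermitianForm (R : Type*) [CommRing R] (σ : R →+* R)
    {M : Type*} [AddCommGroup M] [Module R M] (h : M → M → R) : Prop :=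
  (∀ x y z : M, h (x + y) z = h x z + h y z) ∧
  (∀ (r : R) (x y : M), h (r • x) y = r * h x y) ∧
  (∀ x y : M, h y x = σ (h x y))

/-- The orthogonal complement `K_ℓ = ℓ^⊥ ∩ L = {w ∈ L ∣ ⟨w,ℓ⟩ = 0}`. -/
def orthComplement {R : Type*} [CommRing R] {σ : R →+* R}
    {M : Type*} [AddCommGroup M] [Module R M] {h : M → M → R}
    (hherm : IsHermitianForm R σ h) (ℓ : M) : Submodule R M where
  carrier := {w | h w ℓ = 0}
  add_mem' := by
    intro a b ha hb
    show h (a + b) ℓ = 0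
    rw [hherm.1, ha, hb, add_zero]
  zero_mem' := by
    have h0 := hherm.1 0 0 ℓ
    simp only [add_zero] at h0
    exact left_eq_add.mp h0
  smul_mem' := by
    intro r a ha
    show h (r • a) ℓ = 0
    rw [hherm.2.1, ha, mul_zero]

namespace IsHermitianForm

variable {R : Type*} [CommRing R] {σ : R →+* R} {M : Type*} [AddCommGroup M] [Module R M]
  {h : M → M → R}

theorem sub_left (hh : IsHermitianForm R σ h) (x y z : M) :
    h (x - y) z = h x z - h y z := by
  rw [eq_sub_iff_add_eq, ← hh.1, sub_add_cancel]

theorem span_singleton_sup_orthComplement_eq_top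
    (hh : IsHermitianForm R σ h) {ℓ : M} (hℓ : IsUnit (h ℓ ℓ)) :
    Submodule.span R {ℓ} ⊔ orthComplement hh ℓ = ⊤ := by
  obtain ⟨a, ha⟩ := hℓ.exists_right_inv
  refine eq_top_iff.2 fun v _ => ?_
  have hK : v - (h v ℓ * a) • ℓ ∈ orthComplement hh ℓ := by
    show h (v - (h v ℓ * a) • ℓ) ℓ = 0
    rw [hh.sub_left, hh.2.1, mul_assoc, mul_comm a, ha, mul_one, sub_self]
  simpa using Submodule.add_mem_sup
    (Submodule.smul_mem _ (h v ℓ * a) (Submodule.mem_span_singleton_self ℓ)) hK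

theorem exists_smul_eq_smul_of_dvd [IsDomain R] (hh : IsHermitianForm R σ h)
    (hnd : ∀ x : M, (∀ y : M, h x y = 0) → x = 0)
    (hunimod : ∀ f : M →ₗ[R] R, ∃ v : M, ∀ w : M, f w = h w v)
    {ℓ : M} {a b : R} (ha : a ≠ 0) (hσa : σ a = a) (hσb : σ b = b)
    (hdvd : ∀ v : M, a ∣ b * h v ℓ) : ∃ u : M, b • ℓ = a • u := by
  choose g hg using hdvd
  let f : M →ₗ[R] R :=
    { toFun := g
      map_add' := fun v w => mul_left_cancel₀ ha <| by
        rw [mul_add, ← hg, ← hg, ← hg, hh.1, mul_add]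
      map_smul' := fun r v => mul_left_cancel₀ ha <| by
        rw [smul_eq_mul, RingHom.id_apply, mul_left_comm, ← hg, ← hg, hh.2.1, mul_left_comm] }
  obtain ⟨u, hu⟩ := hunimod f
  refine ⟨u, sub_eq_zero.1 (hnd _ fun w => ?_)⟩
  calc h (b • ℓ - a • u) w = σ (b * h w ℓ - a * g w) := by
        rw [map_sub, map_mul, map_mul, hσa, hσb, ← hh.2.2, show g w = h w u from hu w,
          ← hh.2.2, hh.sub_left, hh.2.1, hh.2.1]
    _ = 0 := by rw [hg, sub_self, map_zero]

end IsHermitianForm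

theorem dvd_of_intCast_smul_eq_smul {R M : Type*} [CommRing R] [IsDomain R] [CharZero R]
    [IsLocalHom (algebraMap ℤ R)] [AddCommGroup M] [Module R M] [Module.IsTorsionFree R M]
    {ℓ u : M} (hℓ : ∀ (r : R) (x : M), ℓ = r • x → IsUnit r) {a b : ℤ} (ha : a ≠ 0)
    (hab : (a : R) • ℓ = (b : R) • u) : b ∣ a := by
  set d : ℤ := (a.gcd b : ℤ)
  obtain ⟨b', hb'⟩ : d ∣ b := Int.gcd_dvd_right a b
  have hd : (d : R) ≠ 0 := by
    simpa [d] using (Int.gcd_pos_of_ne_zero_left b ha).ne'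
  have hgcd : (d : R) = a * a.gcdA b + b * a.gcdB b := by exact_mod_cast Int.gcd_eq_gcd_ab a b
  have hb : (b : R) = d * b' := by exact_mod_cast hb'
  have hℓ' : ℓ = (b' : R) • ((a.gcdA b : R) • u + (a.gcdB b : R) • ℓ) := by
    apply smul_right_injective M hd
    linear_combination (norm := module) (a.gcdA b : R) • hab + hgcd • ℓ
      + hb • ((a.gcdA b : R) • u + (a.gcdB b : R) • ℓ)
  have hunit : IsUnit b' := (isUnit_map_iff (algebraMap ℤ R) b').1 (by simpa using hℓ _ _ hℓ')
  rw [hb', hunit.mul_right_dvd]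
  exact Int.gcd_dvd_left a b

namespace NumberField

open IntermediateField ComplexEmbedding

theorem ComplexEmbedding.isReal_of_conj_eq_of_adjoin_eq_top {F : Type*} [Field F] [CharZero F]
    (ι : F →+* ℂ) {y : F} (hy : starRingEnd ℂ (ι y) = ι y) (htop : ℚ⟮y⟯ = ⊤) : IsReal ι := by
  let E : IntermediateField ℚ F :=
    (RingHom.eqLocusField (conjugate ι) ι).toIntermediateField fun q => by
      simp [RingHom.eqLocusField, conjugate_coe_eq]
  have hE : ℚ⟮y⟯ ≤ E :=
    adjoin_simple_le_iff.2 <| by simpa [E, RingHom.eqLocusField, conjugate_coe_eq]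
  rw [isReal_iff]
  ext z
  exact (htop ▸ hE) (mem_top (x := z))

theorem exists_rat_eq_of_conj_eq {F : Type*} [Field F] [CharZero F]
    (hdeg : Module.finrank ℚ F = 2) {ι : F →+* ℂ} (hι : ¬ IsReal ι) {y : F}
    (hy : starRingEnd ℂ (ι y) = ι y) : ∃ q : ℚ, algebraMap ℚ F q = y := by
  obtain hbot | htop :=
    (isSimpleOrder_of_finrank_prime ℚ F (hdeg ▸ Nat.prime_two)).eq_bot_or_eq_top ℚ⟮y⟯
  · exact mem_bot.1 (hbot ▸ mem_adjoin_simple_self ℚ y)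
  · exact absurd (isReal_of_conj_eq_of_adjoin_eq_top ι hy htop) hι

theorem RingOfIntegers.exists_intCast_eq_of_conj_eq {F : Type*} [Field F] [NumberField F]
    (hdeg : Module.finrank ℚ F = 2) {ι : F →+* ℂ} (hι : ¬ IsReal ι) {x : 𝓞 F}
    (hx : starRingEnd ℂ (ι x) = ι x) : ∃ m : ℤ, (m : 𝓞 F) = x := by
  obtain ⟨q, hq⟩ := exists_rat_eq_of_conj_eq hdeg hι hx
  have hint : IsIntegral ℤ q :=
    (isIntegral_algebraMap_iff (algebraMap ℚ F).injective).1 (hq ▸ x.2.algebraMap)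
  obtain ⟨m, rfl⟩ := IsIntegrallyClosed.isIntegral_iff.1 hint
  exact ⟨m, RingOfIntegers.coe_injective (by simpa using hq)⟩

theorem RingOfIntegers.not_isUnit_two {F : Type*} [Field F] [NumberField F] :
    ¬ IsUnit (2 : 𝓞 F) := by
  simpa using (isUnit_map_iff (algebraMap ℤ (𝓞 F)) 2).not.2 (by norm_num [Int.isUnit_iff])

end NumberField

theorem reflective_vector_norm_eq_neg_two_general
    (F : Type) [Field F] [NumberField F]
    (hdeg : Module.finrank ℚ F = 2)
    (himag : ∀ v : InfinitePlace F, v.IsComplex)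
    (σ : 𝓞 F →+* 𝓞 F) (ι : F →+* ℂ)
    (hσ : ∀ x : 𝓞 F, ι (algebraMap (𝓞 F) F (σ x)) = starRingEnd ℂ (ι (algebraMap (𝓞 F) F x)))
    (M : Type) [AddCommGroup M] [Module (𝓞 F) M]
    [Module.Free (𝓞 F) M]
    (h : M → M → 𝓞 F) (hherm : IsHermitianForm (𝓞 F) σ h)
    -- `L` is unimodular: the form is nondegenerate and induces a surjection
    -- onto the dual module, i.e. `L = L^∨`
    (hnd : ∀ x : M, (∀ y : M, h x y = 0) → x = 0)
    (hunimod : ∀ f : M →ₗ[𝓞 F] 𝓞 F, ∃ v : M, ∀ w : M, f w = h w v)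
    (ℓ : M)
    (hprim : ∀ (r : 𝓞 F) (x : M), ℓ = r • x → IsUnit r)
    (hneg : (ι (algebraMap (𝓞 F) F (h ℓ ℓ))).re < 0)
    -- the reflection `σ_{ℓ,-1}` preserves `L`
    (hrefl : ∀ v : M, h ℓ ℓ ∣ 2 * h v ℓ)
    -- `L/(ℓ𝓞 F ⊕ K_ℓ) ≅ 𝓞 F/2𝓞 F`
    (hquot : Nonempty ((M ⧸ (Submodule.span (𝓞 F) {ℓ} ⊔ orthComplement hherm ℓ))
      ≃ₗ[𝓞 F] ((𝓞 F) ⧸ Ideal.span {(2 : 𝓞 F)}))) :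
    h ℓ ℓ = -2 := by
  have hσℓ : σ (h ℓ ℓ) = h ℓ ℓ := (hherm.2.2 ℓ ℓ).symm
  have hι : ¬ ComplexEmbedding.IsReal ι :=
    InfinitePlace.isComplex_mk_iff.1 (himag (InfinitePlace.mk ι))
  obtain ⟨m, hm⟩ := RingOfIntegers.exists_intCast_eq_of_conj_eq hdeg hι (x := h ℓ ℓ)
    (by rw [← hσ, hσℓ])
  rw [← hm] at hneg hσℓ hrefl ⊢
  have hm0 : m < 0 := by simpa using hneg
  obtain ⟨u, hu⟩ := hherm.exists_smul_eq_smul_of_dvd hnd hunimod (by exact_mod_cast hm0.ne)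
    hσℓ (map_ofNat σ 2) hrefl
  have hm2 : m ∣ 2 := dvd_of_intCast_smul_eq_smul hprim two_ne_zero (by simpa using hu)
  have hm1 : m ≠ -1 := by
    rintro rfl
    obtain ⟨e⟩ := hquot
    have htop := hherm.span_singleton_sup_orthComplement_eq_top (ℓ := ℓ) (by simp [← hm])
    have : Nontrivial (𝓞 F ⧸ Ideal.span {(2 : 𝓞 F)}) :=
      Ideal.Quotient.nontrivial_iff.2 <|
        Ideal.span_singleton_eq_top.not.2 RingOfIntegers.not_isUnit_two
    have : Subsingleton (M ⧸ (Submodule.span (𝓞 F) {ℓ} ⊔ orthComplement hherm ℓ)) :=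
      Submodule.Quotient.subsingleton_iff.2 htop
    exact not_subsingleton _ e.symm.toEquiv.subsingleton
  have hm_ge : -m ≤ 2 := Int.le_of_dvd two_pos (Int.neg_dvd.2 hm2)
  obtain rfl : m = -2 := by omega
  simp

set_option synthInstance.maxHeartbeats 1000000 in
set_option maxHeartbeats 1000000 in
/-- Let `L` be a unimodular Hermitian lattice over `𝓞 F`, where `F` is an
imaginary quadratic field whose discriminant is not divisible by `4` and
`F ≠ ℚ(√-3)` (so `𝓞 F^× = {±1}`), and let `ℓ ∈ L` be a primitive vector with
`⟨ℓ,ℓ⟩ < 0` such that the reflection `σ_{ℓ,-1} : v ↦ v - 2⟨v,ℓ⟩/⟨ℓ,ℓ⟩·ℓ`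
preserves `L` (i.e. `⟨ℓ,ℓ⟩ ∣ 2⟨v,ℓ⟩` for all `v ∈ L`) and
`L/(ℓ𝓞 F ⊕ K_ℓ) ≅ 𝓞 F/2𝓞 F`.  Then `⟨ℓ,ℓ⟩ = -2`. -/
theorem reflective_vector_norm_eq_neg_two
    (F : Type) [Field F] [NumberField F]
    (hdeg : Module.finrank ℚ F = 2)
    (himag : ∀ v : InfinitePlace F, v.IsComplex)
    (hdisc4 : ¬ (4 : ℤ) ∣ NumberField.discr F)
    (hdisc3 : NumberField.discr F ≠ -3)
    (σ : 𝓞 F →+* 𝓞 F) (ι : F →+* ℂ)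
    (hσ : ∀ x : 𝓞 F, ι (algebraMap (𝓞 F) F (σ x)) = starRingEnd ℂ (ι (algebraMap (𝓞 F) F x)))
    (M : Type) [AddCommGroup M] [Module (𝓞 F) M]
    [Module.Free (𝓞 F) M] [Module.Finite (𝓞 F) M]
    (h : M → M → 𝓞 F) (hherm : IsHermitianForm (𝓞 F) σ h)
    -- `L` is unimodular: the form is nondegenerate and induces a surjection
    -- onto the dual module, i.e. `L = L^∨`
    (hnd : ∀ x : M, (∀ y : M, h x y = 0) → x = 0)
    (hunimod : ∀ f : M →ₗ[𝓞 F] 𝓞 F, ∃ v : M, ∀ w : M, f w = h w v)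
    (ℓ : M)
    (hprim : ∀ (r : 𝓞 F) (x : M), ℓ = r • x → IsUnit r)
    (hneg : (ι (algebraMap (𝓞 F) F (h ℓ ℓ))).re < 0)
    -- the reflection `σ_{ℓ,-1}` preserves `L`
    (hrefl : ∀ v : M, h ℓ ℓ ∣ 2 * h v ℓ)
    -- `L/(ℓ𝓞 F ⊕ K_ℓ) ≅ 𝓞 F/2𝓞 F`
    (hquot : Nonempty ((M ⧸ (Submodule.span (𝓞 F) {ℓ} ⊔ orthComplement hherm ℓ))
      ≃ₗ[𝓞 F] ((𝓞 F) ⧸ Ideal.span {(2 : 𝓞 F)}))) :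
    h ℓ ℓ = -2 :=
  reflective_vector_norm_eq_neg_two_general F hdeg himag σ ι hσ M h hherm hnd hunimod ℓ hprim hneg
    hrefl hquot
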